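/- For any multi-set [i,j,k] of species and the block structure of R ⊗ I_N and I_N ⊗ R restricted to rows/columns indexed by permutations of [i,j,k]: when i = j > k, the restricted Yang–Baxter identity holds: the product of the three 3×3 matrices [[S_{γβ}(k),T_{γβ}(k),0],[0,-1,0],[0,0,S_{γβ}(i)]], [[S_{γα}(i),0,0],[0,S_{γα}(k),T_{γα}(k)],[0,0,-1]], [[S_{βα}(k),T_{βα}(k),0],[0,-1,0],[0,0,S_{βα}(i)]] equals the product [[S_{βα}(i),0,0],[0,S_{βα}(k),T_{βα}(k)],[0,0,-1]], [[S_{γα}(k),T_{γα}(k),0],[0,-1,0],[0,0,S_{γα}(i)]], [[S_{γβ}(i),0,0],[0,S_{γβ}(k),T_{γβ}(k)],[0,0,-1]]. -/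

import Mathlib

noncomputable def S3 (b u v : ℂ) : ℂ := -(1 - b * u) / (1 - b * v)
noncomputable def T3 (b u v : ℂ) : ℂ := b * (u - v) / (1 - b * v)

/-! Writing `x_λ = 1 - b_m ξ_λ`, one has `S_{μλ}(m) = -x_μ / x_λ` and `T_{μλ}(m) = 1 + S_{μλ}(m)`,
so the `S` of one species multiply like ratios: `S_{γβ} S_{βα} = -S_{γα}`. The two species are
coupled only through the fact that `1 - b_k ξ` and `1 - b_i ξ` are both affine in `ξ`, which gives
the exchange relation `T_{γα}(k) S_{βα}(i) = T_{γβ}(k) S_{βα}(k) + T_{βα}(k) S_{γα}(i)`.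
Multiplying out, each entry of the block identity is a consequence of these three relations. -/

theorem block_yangBaxter {A : Type*} [CommRing A] {p q r P Q R : A}
    (hpr : p * r = -q) (hPR : P * R = -Q) (hexchange : (1 + q) * R = (1 + p) * r + (1 + r) * Q) :
    !![p, 1 + p, 0; 0, -1, 0; 0, 0, P] * !![Q, 0, 0; 0, q, 1 + q; 0, 0, -1] *
      !![r, 1 + r, 0; 0, -1, 0; 0, 0, R] =
    !![R, 0, 0; 0, r, 1 + r; 0, 0, -1] * !![q, 1 + q, 0; 0, -1, 0; 0, 0, Q] *
      !![P, 0, 0; 0, p, 1 + p; 0, 0, -1] := by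
  simp only [Matrix.mul_fin_three, EmbeddingLike.apply_eq_iff_eq, Matrix.vecCons_inj, and_true,
    true_and, mul_zero, zero_mul, add_zero, zero_add, mul_one, one_mul, mul_neg, neg_mul, neg_zero]
  refine ⟨⟨?_, ?_, by ring⟩, ⟨?_, ?_⟩, ?_⟩
  · linear_combination Q * hpr - q * hPR
  · linear_combination -p * hexchange - (1 + p) * hpr
  · linear_combination hpr
  · linear_combination -hexchange
  · linear_combination -hPR

theorem T3_eq_one_add_S3 {b v : ℂ} (hv : 1 - b * v ≠ 0) (u : ℂ) : T3 b u v = 1 + S3 b u v := by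
  unfold T3 S3
  field_simp
  ring

theorem S3_mul_S3 {b v : ℂ} (hv : 1 - b * v ≠ 0) (u w : ℂ) : S3 b u v * S3 b v w = -S3 b u w := by
  unfold S3
  field_simp

theorem T3_mul_S3_exchange {a c u v w : ℂ} (hcv : 1 - c * v ≠ 0) (hcw : 1 - c * w ≠ 0)
    (haw : 1 - a * w ≠ 0) :
    T3 c u w * S3 a v w = T3 c u v * S3 c v w + T3 c v w * S3 a u w := by
  simp only [S3, T3, div_mul_div_comm]
  rw [div_add_div _ _ (by simp [*]) (by simp [*]), div_eq_div_iff (by simp [*]) (by simp [*])]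
  ring

theorem stmt_19_general (bi bk : ℂ) (ξα ξβ ξγ : ℂ)
    -- ξα ξβ ξγ : ℂ)
    (hiα : 1 - bi * ξα ≠ 0) (hiβ : 1 - bi * ξβ ≠ 0)
    (hkα : 1 - bk * ξα ≠ 0) (hkβ : 1 - bk * ξβ ≠ 0) :
    !![S3 bk ξγ ξβ, T3 bk ξγ ξβ, 0; 0, -1, 0; 0, 0, S3 bi ξγ ξβ] *
    !![S3 bi ξγ ξα, 0, 0; 0, S3 bk ξγ ξα, T3 bk ξγ ξα; 0, 0, -1] *
    !![S3 bk ξβ ξα, T3 bk ξβ ξα, 0; 0, -1, 0; 0, 0, S3 bi ξβ ξα] =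
    !![S3 bi ξβ ξα, 0, 0; 0, S3 bk ξβ ξα, T3 bk ξβ ξα; 0, 0, -1] *
    !![S3 bk ξγ ξα, T3 bk ξγ ξα, 0; 0, -1, 0; 0, 0, S3 bi ξγ ξα] *
    !![S3 bi ξγ ξβ, 0, 0; 0, S3 bk ξγ ξβ, T3 bk ξγ ξβ; 0, 0, -1] := by
  have hexchange := T3_mul_S3_exchange (u := ξγ) hkβ hkα hiα
  simp only [T3_eq_one_add_S3 hkα, T3_eq_one_add_S3 hkβ] at hexchange ⊢
  exact block_yangBaxter (S3_mul_S3 hkβ _ _) (S3_mul_S3 hiβ _ _) hexchange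

/-- Yang–Baxter-type identity for the 3×3 blocks (case i = j > k). -/
theorem stmt_19 {i k : ℕ} (hik : k < i) (b : ℕ → ℂ) (bi bk : ℂ) (hbi : bi = b i) (hbk : bk = b k) (ξα ξβ ξγ : ℂ)
    -- ξα ξβ ξγ : ℂ)
    (hiα : 1 - bi * ξα ≠ 0) (hiβ : 1 - bi * ξβ ≠ 0) (hiγ : 1 - bi * ξγ ≠ 0)
    (hkα : 1 - bk * ξα ≠ 0) (hkβ : 1 - bk * ξβ ≠ 0) (hkγ : 1 - bk * ξγ ≠ 0) :
    !![S3 bk ξγ ξβ, T3 bk ξγ ξβ, 0; 0, -1, 0; 0, 0, S3 bi ξγ ξβ] *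
    !![S3 bi ξγ ξα, 0, 0; 0, S3 bk ξγ ξα, T3 bk ξγ ξα; 0, 0, -1] *
    !![S3 bk ξβ ξα, T3 bk ξβ ξα, 0; 0, -1, 0; 0, 0, S3 bi ξβ ξα] =
    !![S3 bi ξβ ξα, 0, 0; 0, S3 bk ξβ ξα, T3 bk ξβ ξα; 0, 0, -1] *
    !![S3 bk ξγ ξα, T3 bk ξγ ξα, 0; 0, -1, 0; 0, 0, S3 bi ξγ ξα] *
    !![S3 bi ξγ ξβ, 0, 0; 0, S3 bk ξγ ξβ, T3 bk ξγ ξβ; 0, 0, -1] :=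
  stmt_19_general bi bk ξα ξβ ξγ hiα hiβ hkα hkβ
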